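/- For every integer d ≥ 2 and every x ∈ [1/2, 1), the regularized incomplete Beta function satisfies I_x((d−1)/2, 1/2) ≥ 1 − 2·√(2(1−x)) / B((d−1)/2, 1/2). Moreover, lim_{x → 1⁻} (1 − I_x((d−1)/2, 1/2)) / √(1−x) = 2 / B((d−1)/2, 1/2). -/

import Mathlib

open Real

noncomputable section

/-- The Beta function `B(a,b) = ∫₀¹ t^{a−1}(1−t)^{b−1} dt`. -/
def Beta (a b : ℝ) : ℝ := ∫ t in (0 : ℝ)..1, t ^ (a - 1) * (1 - t) ^ (b - 1)

/-- The regularized incomplete Beta function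
`I_x(a,b) = (∫₀ˣ t^{a−1}(1−t)^{b−1} dt)/B(a,b)`. -/
def regIncBeta (a b x : ℝ) : ℝ :=
  (∫ t in (0 : ℝ)..x, t ^ (a - 1) * (1 - t) ^ (b - 1)) / Beta a b

/-! The tail `1 - I_x(a,b)` is `∫ₓ¹ t^{a−1}(1−t)^{b−1} dt / B(a,b)`. On `[x,1]` the factor `t^{a−1}`
lies between `x^{a−1}` and `1`, so the tail integral is `(1−x)^b / b` times a number between them:
this gives the limit as `x → 1⁻`, and for `a ≥ 1/2`, `x ≥ 1/2` the bound `t^{a−1} ≤ t^{−1/2} ≤ √2`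
gives the inequality. -/

open MeasureTheory Set Filter Topology

def upperIncBeta (a b x : ℝ) : ℝ := ∫ t in x..1, t ^ (a - 1) * (1 - t) ^ (b - 1)

section

variable {a b x : ℝ}

lemma intervalIntegrable_betaIntegrand (ha : 0 < a) (hb : 0 < b) :
    IntervalIntegrable (fun t : ℝ => t ^ (a - 1) * (1 - t) ^ (b - 1)) volume 0 1 := by
  have norm_cpow : ∀ (s r : ℝ), 0 ≤ s → ‖(s : ℂ) ^ ((r : ℂ) - 1)‖ = s ^ (r - 1) := fun s r hs => by
    rw [← Complex.ofReal_one, ← Complex.ofReal_sub, ← Complex.ofReal_cpow hs, Complex.norm_real,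
      norm_of_nonneg (rpow_nonneg hs _)]
  refine (Complex.betaIntegral_convergent (u := a) (v := b) (by simpa) (by simpa)).norm.congr
    fun t ht => ?_
  rw [uIoc_of_le zero_le_one] at ht
  have h1t : (1 : ℂ) - t = ((1 - t : ℝ) : ℂ) := by push_cast; ring
  rw [norm_mul, h1t, norm_cpow t a ht.1.le, norm_cpow (1 - t) b (sub_nonneg.2 ht.2)]

lemma intervalIntegrable_betaIntegrand_of_mem_Icc (ha : 0 < a) (hb : 0 < b) {c d : ℝ}
    (hc : c ∈ Icc 0 1) (hd : d ∈ Icc 0 1) :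
    IntervalIntegrable (fun t : ℝ => t ^ (a - 1) * (1 - t) ^ (b - 1)) volume c d :=
  (intervalIntegrable_betaIntegrand ha hb).mono_set <| uIcc_subset_uIcc
    (by rwa [uIcc_of_le zero_le_one]) (by rwa [uIcc_of_le zero_le_one])

lemma Beta_pos (ha : 0 < a) (hb : 0 < b) : 0 < Beta a b :=
  intervalIntegral.intervalIntegral_pos_of_pos_on (intervalIntegrable_betaIntegrand ha hb)
    (fun _ ht => mul_pos (rpow_pos_of_pos ht.1 _) (rpow_pos_of_pos (sub_pos.2 ht.2) _))
    zero_lt_one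

lemma one_sub_regIncBeta (ha : 0 < a) (hb : 0 < b) (hx : x ∈ Icc 0 1) :
    1 - regIncBeta a b x = upperIncBeta a b x / Beta a b := by
  have hsplit : (∫ t in (0 : ℝ)..x, t ^ (a - 1) * (1 - t) ^ (b - 1)) + upperIncBeta a b x =
      Beta a b :=
    intervalIntegral.integral_add_adjacent_intervals
      (intervalIntegrable_betaIntegrand_of_mem_Icc ha hb (left_mem_Icc.2 zero_le_one) hx)
      (intervalIntegrable_betaIntegrand_of_mem_Icc ha hb hx (right_mem_Icc.2 zero_le_one))
  have hB := (Beta_pos ha hb).ne'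
  rw [regIncBeta, eq_div_iff hB, sub_mul, one_mul, div_mul_cancel₀ _ hB]
  linarith

lemma integral_one_sub_rpow (hb : 0 < b) (x : ℝ) :
    ∫ t in x..1, (1 - t) ^ (b - 1) = (1 - x) ^ b / b := by
  rw [intervalIntegral.integral_comp_sub_left (fun u => u ^ (b - 1)),
    integral_rpow (Or.inl (by linarith)), sub_self, sub_add_cancel, zero_rpow hb.ne', sub_zero]

lemma intervalIntegrable_one_sub_rpow (hb : 0 < b) (x y : ℝ) :
    IntervalIntegrable (fun t : ℝ => (1 - t) ^ (b - 1)) volume x y := by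
  simpa using (intervalIntegral.intervalIntegrable_rpow' (a := 1 - x) (b := 1 - y)
    (r := b - 1) (by linarith)).comp_sub_left 1

lemma upperIncBeta_le (ha : 0 < a) (hb : 0 < b) (hx : x ∈ Icc 0 1) {M : ℝ}
    (hM : ∀ t ∈ Icc x 1, t ^ (a - 1) ≤ M) :
    upperIncBeta a b x ≤ M * ((1 - x) ^ b / b) :=
  calc upperIncBeta a b x ≤ ∫ t in x..1, M * (1 - t) ^ (b - 1) :=
        intervalIntegral.integral_mono_on hx.2
          (intervalIntegrable_betaIntegrand_of_mem_Icc ha hb hx (right_mem_Icc.2 zero_le_one))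
          ((intervalIntegrable_one_sub_rpow hb x 1).const_mul M) fun t ht =>
            mul_le_mul_of_nonneg_right (hM t ht) (rpow_nonneg (sub_nonneg.2 ht.2) _)
    _ = M * ((1 - x) ^ b / b) := by
        rw [intervalIntegral.integral_const_mul, integral_one_sub_rpow hb]

lemma le_upperIncBeta (ha : 0 < a) (hb : 0 < b) (hx : x ∈ Icc 0 1) {m : ℝ}
    (hm : ∀ t ∈ Icc x 1, m ≤ t ^ (a - 1)) :
    m * ((1 - x) ^ b / b) ≤ upperIncBeta a b x :=
  calc m * ((1 - x) ^ b / b) = ∫ t in x..1, m * (1 - t) ^ (b - 1) := by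
        rw [intervalIntegral.integral_const_mul, integral_one_sub_rpow hb]
    _ ≤ upperIncBeta a b x :=
        intervalIntegral.integral_mono_on hx.2
          ((intervalIntegrable_one_sub_rpow hb x 1).const_mul m)
          (intervalIntegrable_betaIntegrand_of_mem_Icc ha hb hx (right_mem_Icc.2 zero_le_one))
          fun t ht => mul_le_mul_of_nonneg_right (hm t ht) (rpow_nonneg (sub_nonneg.2 ht.2) _)

lemma rpow_mem_uIcc_rpow_one {t : ℝ} (e : ℝ) (hx : 0 < x) (ht : t ∈ Icc x 1) :
    t ^ e ∈ uIcc (x ^ e) 1 := by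
  have ht0 : 0 < t := hx.trans_le ht.1
  rcases le_total 0 e with he | he
  · exact mem_uIcc.2 <| Or.inl ⟨rpow_le_rpow hx.le ht.1 he, rpow_le_one ht0.le ht.2 he⟩
  · exact mem_uIcc.2 <| Or.inr
      ⟨one_le_rpow_of_pos_of_le_one_of_nonpos ht0 ht.2 he, rpow_le_rpow_of_nonpos hx ht.1 he⟩

lemma rpow_le_sqrt_two {t e : ℝ} (ht : t ∈ Icc (1 / 2) 1) (he : -(1 / 2) ≤ e) : t ^ e ≤ √2 :=
  calc t ^ e ≤ t ^ (-(1 / 2) : ℝ) := rpow_le_rpow_of_exponent_ge (by linarith [ht.1]) ht.2 he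
    _ ≤ (1 / 2) ^ (-(1 / 2) : ℝ) := rpow_le_rpow_of_nonpos (by norm_num) ht.1 (by norm_num)
    _ = √2 := by rw [rpow_neg (by norm_num), ← sqrt_eq_rpow, one_div, sqrt_inv, inv_inv]

lemma one_sub_regIncBeta_le (ha : 1 / 2 ≤ a) (hb : 0 < b) (hx : x ∈ Icc (1 / 2) 1) :
    1 - regIncBeta a b x ≤ √2 * (1 - x) ^ b / (b * Beta a b) := by
  have hx0 : x ∈ Icc 0 1 := ⟨by linarith [hx.1], hx.2⟩
  rw [one_sub_regIncBeta (by linarith) hb hx0, mul_comm b, ← div_div, div_right_comm,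
    mul_div_assoc]
  exact div_le_div_of_nonneg_right (upperIncBeta_le (by linarith) hb hx0 fun t ht =>
    rpow_le_sqrt_two ⟨hx.1.trans ht.1, ht.2⟩ (by linarith)) (Beta_pos (by linarith) hb).le

lemma tendsto_upperIncBeta_div (ha : 0 < a) (hb : 0 < b) :
    Tendsto (fun x => upperIncBeta a b x / ((1 - x) ^ b / b)) (𝓝[<] 1) (𝓝 1) := by
  have hpow : Tendsto (fun x : ℝ => x ^ (a - 1)) (𝓝[<] 1) (𝓝 1) := by
    simpa using (continuousAt_rpow_const 1 (a - 1) (Or.inl one_ne_zero)).tendsto.mono_left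
      nhdsWithin_le_nhds
  have hnear : ∀ᶠ x in 𝓝[<] (1 : ℝ), x ∈ Ioo 0 1 := Ioo_mem_nhdsLT zero_lt_one
  refine tendsto_of_tendsto_of_tendsto_of_le_of_le'
    (by simpa using hpow.min (tendsto_const_nhds (x := (1 : ℝ))))
    (by simpa using hpow.max (tendsto_const_nhds (x := (1 : ℝ)))) ?_ ?_
  · filter_upwards [hnear] with x hx
    have hpos : 0 < (1 - x) ^ b / b := div_pos (rpow_pos_of_pos (sub_pos.2 hx.2) b) hb
    exact (le_div_iff₀ hpos).2 <| le_upperIncBeta ha hb ⟨hx.1.le, hx.2.le⟩ fun t ht =>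
      (rpow_mem_uIcc_rpow_one (a - 1) hx.1 ht).1
  · filter_upwards [hnear] with x hx
    have hpos : 0 < (1 - x) ^ b / b := div_pos (rpow_pos_of_pos (sub_pos.2 hx.2) b) hb
    exact (div_le_iff₀ hpos).2 <| upperIncBeta_le ha hb ⟨hx.1.le, hx.2.le⟩ fun t ht =>
      (rpow_mem_uIcc_rpow_one (a - 1) hx.1 ht).2

lemma tendsto_one_sub_regIncBeta_div (ha : 0 < a) (hb : 0 < b) :
    Tendsto (fun x => (1 - regIncBeta a b x) / (1 - x) ^ b) (𝓝[<] 1)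
      (𝓝 (1 / (b * Beta a b))) := by
  have hlim := (tendsto_upperIncBeta_div ha hb).mul_const (1 / (b * Beta a b))
  rw [one_mul] at hlim
  refine hlim.congr' ?_
  filter_upwards [Ioo_mem_nhdsLT zero_lt_one] with x hx
  rw [one_sub_regIncBeta ha hb ⟨hx.1.le, hx.2.le⟩]
  field_simp

end

/-- **Lemma (lower bound and `x → 1⁻` asymptotics of `I_x((d−1)/2, 1/2)`)**. -/
theorem regIncBeta_near_one
    (d : ℕ) (hd2 : 2 ≤ d) :
    (∀ x ∈ Set.Ico (1 / 2 : ℝ) 1,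
        1 - 2 * Real.sqrt (2 * (1 - x)) / Beta (((d : ℝ) - 1) / 2) (1 / 2) ≤
          regIncBeta (((d : ℝ) - 1) / 2) (1 / 2) x) ∧
      Filter.Tendsto
        (fun x : ℝ =>
          (1 - regIncBeta (((d : ℝ) - 1) / 2) (1 / 2) x) / Real.sqrt (1 - x))
        (nhdsWithin 1 (Set.Iio 1))
        (nhds (2 / Beta (((d : ℝ) - 1) / 2) (1 / 2))) := by
  have ha : (1 : ℝ) / 2 ≤ ((d : ℝ) - 1) / 2 := by
    have : (2 : ℝ) ≤ d := by exact_mod_cast hd2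
    linarith
  set a : ℝ := ((d : ℝ) - 1) / 2
  refine ⟨fun x hx => ?_, ?_⟩
  · have hbound : √2 * (1 - x) ^ (1 / 2 : ℝ) / (1 / 2 * Beta a (1 / 2)) =
        2 * √(2 * (1 - x)) / Beta a (1 / 2) := by
      rw [sqrt_mul zero_le_two, sqrt_eq_rpow (1 - x)]
      field_simp
    linarith [one_sub_regIncBeta_le ha one_half_pos (Ico_subset_Icc_self hx)]
  · have hlim : 1 / (1 / 2 * Beta a (1 / 2)) = 2 / Beta a (1 / 2) := by field_simp
    simpa only [sqrt_eq_rpow, hlim] using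
      tendsto_one_sub_regIncBeta_div (one_half_pos.trans_le ha) one_half_pos
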